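/- Every F_{q^m}-linear isometry of F_{q^m}^n for the sum-rank metric with equal sublengths N = n_1 = ... = n_ℓ is of the form φ(c^(1),...,c^(ℓ)) = (β_1 c^(σ(1)) A_1, ..., β_ℓ c^(σ(ℓ)) A_ℓ) for some nonzero scalars β_i ∈ F_{q^m}^*, invertible matrices A_i ∈ F_q^{N×N}, and a permutation σ of {1,...,ℓ}; conversely every such map is a linear sum-rank isometry. -/

import Mathlib

/-!
A sum-rank isometry `φ` preserves weight one, and the vectors of weight one are the rank-one
vectors `γ • x` (`x` over `K`) of a single block. The images of the `K`-rational vectors of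
block `i` are closed under addition and each is supported on one block, so they all live on a
common block `σ i`; as `φ` is injective, hence surjective, every block is hit and `σ` is a
permutation. Each block map `ψ` is then an isometry of `L^N` for the rank weight. It sends the
unit vector `e_j` to some `γ_j • a_j` with `a_j` over `K`, and a `K`-linear functional vanishing
on `β = γ_{j₀}` shows that every `γ_j` lies on the line `K ∙ β`: otherwise `ψ e_j` and `ψ e_{j₀}`
would lie on one `L`-line, against injectivity. So `ψ v = β • v A` with `A` over `K`,
invertible because `ψ` is injective.
-/

open Matrix Finset

noncomputable def rkWt {K L : Type*} [Field K] [Field L] [Algebra K L] {m : ℕ}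
    (B : Module.Basis (Fin m) K L) {p : ℕ} (v : Fin p → L) : ℕ :=
  (Matrix.of (fun a (j : Fin p) => B.repr (v j) a) : Matrix (Fin m) (Fin p) K).rank

/-- Sum-rank weight with equal sublengths `N` and `ℓ` shots. -/
noncomputable def srWt {K L : Type*} [Field K] [Field L] [Algebra K L] {m ℓ N : ℕ}
    (B : Module.Basis (Fin m) K L) (c : Fin ℓ → Fin N → L) : ℕ :=
  ∑ i, rkWt B (c i)

theorem exists_eq_smul_of_smul_add_smul_eq {K V ι : Type*} [Field K]
    [AddCommGroup V] [Module K V] {γ β δ : V} (hγ : γ ∉ K ∙ β) {a a' b : ι → K}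
    (h : ∀ t, a t • γ + a' t • β = b t • δ) : ∃ c : K, a = c • b := by
  obtain ⟨f, hfγ, hmap⟩ := Submodule.exists_dual_map_eq_bot_of_notMem hγ inferInstance
  have hfβ : f β = 0 := by
    simpa [Submodule.map_span, Set.image_singleton] using hmap
  refine ⟨f δ / f γ, funext fun t => ?_⟩
  have hft := congr_arg f (h t)
  simp only [map_add, map_smul, hfβ, smul_eq_mul, mul_zero, add_zero] at hft
  rw [Pi.smul_apply, smul_eq_mul, div_mul_eq_mul_div, eq_div_iff hfγ, hft, mul_comm]

theorem exists_forall_ne_apply_eq_zero_of_map_add {α ι M : Type*} [Add α] [Nonempty ι]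
    [AddCommMonoid M] {u : α → ι → M} (hu_add : ∀ x y, u (x + y) = u x + u y)
    (hu : ∀ x {k k'}, u x k ≠ 0 → u x k' ≠ 0 → k = k') : ∃ s, ∀ x k, k ≠ s → u x k = 0 := by
  by_cases h : ∃ x s, u x s ≠ 0
  · obtain ⟨x, s, hxs⟩ := h
    refine ⟨s, fun y k hks => by_contra fun hyk => hks ?_⟩
    have hys : u y s = 0 := by_contra fun h => hks (hu y hyk h)
    have hxk : u x k = 0 := by_contra fun h => hks (hu x h hxs)
    exact hu (x + y) (by simpa [hu_add, hxk] using hyk) (by simpa [hu_add, hys] using hxs)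
  · push Not at h
    exact ⟨Classical.arbitrary ι, fun x k _ => h x k⟩

theorem not_map_single_one_mem_span_singleton {R M n : Type*} [Field R] [AddCommGroup M]
    [Module R M] [DecidableEq n] {f : (n → R) →ₗ[R] M} (hf : Function.Injective f) {j j' : n}
    (hj : j ≠ j') (w : M) : ¬ (f (Pi.single j 1) ∈ R ∙ w ∧ f (Pi.single j' 1) ∈ R ∙ w) := by
  rintro ⟨hx, hy⟩
  obtain ⟨s, hs⟩ := Submodule.mem_span_singleton.1 hx
  obtain ⟨t, ht⟩ := Submodule.mem_span_singleton.1 hy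
  have hcomb : f (t • Pi.single j 1 - s • Pi.single j' 1) = f 0 := by
    rw [map_sub, map_smul, map_smul, ← hs, ← ht, smul_smul, smul_smul, mul_comm, sub_self, map_zero]
  have hs0 : s = 0 := by simpa [hj] using congr_fun (hf hcomb) j'
  have hzero : f (Pi.single j 1) = f 0 := by rw [← hs, hs0, zero_smul, map_zero]
  simpa using congr_fun (hf hzero) j

section RankWeight

variable {K L : Type*} [Field K] [Field L] [Algebra K L] {m : ℕ} (B : Module.Basis (Fin m) K L)

theorem rkWt_eq_finrank_span {p : ℕ} (v : Fin p → L) :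
    rkWt B v = Module.finrank K (Submodule.span K (Set.range v)) := by
  rw [rkWt, Matrix.rank_eq_finrank_span_cols, ← LinearEquiv.finrank_map_eq B.equivFun.symm,
    Submodule.map_span, ← Set.range_comp]
  exact congrArg (fun w => Module.finrank K (Submodule.span K (Set.range w)))
    (funext fun j => B.equivFun.symm_apply_apply (v j))

theorem rkWt_eq_zero_iff {p : ℕ} {v : Fin p → L} : rkWt B v = 0 ↔ v = 0 := by
  have := Module.Finite.of_basis B
  rw [rkWt_eq_finrank_span, Submodule.finrank_eq_zero, Submodule.span_eq_bot, Set.forall_mem_range,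
    funext_iff]
  rfl

theorem rkWt_le_one_iff {p : ℕ} {v : Fin p → L} :
    rkWt B v ≤ 1 ↔ ∃ (γ : L) (a : Fin p → K), v = fun t => a t • γ := by
  have := Module.Finite.of_basis B
  rw [rkWt_eq_finrank_span, ← Nat.cast_le_one (α := Cardinal), Module.finrank_eq_rank,
    rank_submodule_le_one_iff']
  simp only [Submodule.span_le, Set.range_subset_iff, SetLike.mem_coe,
    Submodule.mem_span_singleton, Classical.skolem, funext_iff, eq_comm]

theorem rkWt_smul {p : ℕ} {β : L} (hβ : β ≠ 0) (v : Fin p → L) : rkWt B (β • v) = rkWt B v := by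
  let e : L ≃ₗ[K] L := (LinearEquiv.smulOfNeZero L L β hβ).restrictScalars K
  rw [rkWt_eq_finrank_span, rkWt_eq_finrank_span, show β • v = e ∘ v from rfl, Set.range_comp,
    Submodule.span_image_linearEquiv, LinearEquiv.finrank_map_eq]

theorem rkWt_vecMul_le {p r : ℕ} (A : Matrix (Fin p) (Fin r) K) (v : Fin p → L) :
    rkWt B (v ᵥ* A.map (algebraMap K L)) ≤ rkWt B v := by
  have := Module.Finite.of_basis B
  rw [rkWt_eq_finrank_span, rkWt_eq_finrank_span]
  refine Submodule.finrank_mono (Submodule.span_le.2 (Set.range_subset_iff.2 fun t => ?_))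
  have : (v ᵥ* A.map (algebraMap K L)) t = ∑ k, A k t • v k := by
    simp [Matrix.vecMul, dotProduct, Algebra.smul_def, mul_comm]
  rw [SetLike.mem_coe, this]
  exact Submodule.sum_mem _ fun k _ => Submodule.smul_mem _ _ (Submodule.subset_span ⟨k, rfl⟩)

theorem rkWt_vecMul_of_isUnit {p : ℕ} {A : Matrix (Fin p) (Fin p) K} (hA : IsUnit A)
    (v : Fin p → L) : rkWt B (v ᵥ* A.map (algebraMap K L)) = rkWt B v := by
  refine (rkWt_vecMul_le B A v).antisymm ?_
  have hinv : A * A⁻¹ = 1 := A.mul_nonsing_inv ((A.isUnit_iff_isUnit_det).1 hA)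
  calc rkWt B v = rkWt B ((v ᵥ* A.map (algebraMap K L)) ᵥ* A⁻¹.map (algebraMap K L)) := by
        rw [Matrix.vecMul_vecMul, ← Matrix.map_mul, hinv, Matrix.map_one _ (map_zero _) (map_one _),
          Matrix.vecMul_one]
    _ ≤ _ := rkWt_vecMul_le B _ _

theorem algebraMap_comp_single_one {n : Type*} [DecidableEq n] (j : n) :
    algebraMap K L ∘ Pi.single j 1 = Pi.single j 1 := by
  ext t
  by_cases h : t = j <;> simp [h]

theorem rkWt_algebraMap_comp_le_one {p : ℕ} (x : Fin p → K) : rkWt B (algebraMap K L ∘ x) ≤ 1 :=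
  (rkWt_le_one_iff B).2 ⟨1, x, funext fun t => Algebra.algebraMap_eq_smul_one (x t)⟩

end RankWeight

section RankIsometry

variable {K L : Type*} [Field K] [Field L] [Algebra K L] {m N : ℕ} {B : Module.Basis (Fin m) K L}

theorem injective_of_rkWt_isometry {p r : ℕ} {ψ : (Fin p → L) →ₗ[L] (Fin r → L)}
    (hψ : ∀ v, rkWt B (ψ v) = rkWt B v) : Function.Injective ψ := by
  rw [← LinearMap.ker_eq_bot, LinearMap.ker_eq_bot']
  intro v hv
  rw [← rkWt_eq_zero_iff B, ← hψ, hv, rkWt_eq_zero_iff]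

variable {ψ : (Fin N → L) →ₗ[L] (Fin N → L)}

theorem mem_span_singleton_of_rkWt_map_single_add_single_le_one
    (hinj : Function.Injective ψ) {j j₀ : Fin N} (hj : j ≠ j₀) {γ β : L} {a a₀ : Fin N → K}
    (hγ : ψ (Pi.single j 1) = fun t => a t • γ) (hβ : ψ (Pi.single j₀ 1) = fun t => a₀ t • β)
    (hsum : rkWt B (ψ (Pi.single j 1 + Pi.single j₀ 1)) ≤ 1) : γ ∈ K ∙ β := by
  by_contra hγβ
  obtain ⟨δ, b, hδb⟩ := (rkWt_le_one_iff B).1 hsum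
  have hab : ∀ t, a t • γ + a₀ t • β = b t • δ := fun t => by
    simpa [hγ, hβ] using congr_fun hδb t
  -- Then `ψ (Pi.single j 1)` and `ψ (Pi.single j₀ 1)` are both `L`-multiples of `b`.
  obtain ⟨c, rfl⟩ := exists_eq_smul_of_smul_add_smul_eq hγβ hab
  refine not_map_single_one_mem_span_singleton hinj hj (algebraMap K L ∘ b) ⟨?_, ?_⟩
  · refine Submodule.mem_span_singleton.2 ⟨c • γ, ?_⟩
    rw [hγ]
    ext t
    simp [Algebra.smul_def, mul_comm, mul_left_comm]
  · refine Submodule.mem_span_singleton.2 ⟨δ - c • γ, ?_⟩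
    rw [hβ]
    ext t
    rw [Pi.smul_apply, Function.comp_apply, eq_sub_of_add_eq' (hab t)]
    simp [Algebra.smul_def]
    ring

theorem exists_unit_forall_map_single_eq_smul_of_rkWt_isometry
    (hψ : ∀ v, rkWt B (ψ v) = rkWt B v) :
    ∃ β : Lˣ, ∀ j, ∃ a : Fin N → K, ψ (Pi.single j 1) = fun t => a t • (β : L) := by
  rcases isEmpty_or_nonempty (Fin N) with _ | ⟨⟨j₀⟩⟩
  · exact ⟨1, isEmptyElim⟩
  have hinj := injective_of_rkWt_isometry hψ
  have hrank : ∀ v, rkWt B v ≤ 1 → ∃ (γ : L) (a : Fin N → K), ψ v = fun t => a t • γ :=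
    fun v hv => (rkWt_le_one_iff B).1 ((hψ v).trans_le hv)
  have hsingle : ∀ j, rkWt B (Pi.single j 1 : Fin N → L) ≤ 1 := fun j => by
    simpa only [algebraMap_comp_single_one] using rkWt_algebraMap_comp_le_one B (Pi.single j 1)
  obtain ⟨β, a₀, h₀⟩ := hrank _ (hsingle j₀)
  have hβ : β ≠ 0 := by
    rintro rfl
    have hzero : ψ (Pi.single j₀ 1) = ψ 0 := by
      rw [h₀, map_zero]
      ext t
      simp
    simpa using congr_fun (hinj hzero) j₀
  refine ⟨Units.mk0 β hβ, fun j => ?_⟩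
  obtain rfl | hj := eq_or_ne j j₀
  · exact ⟨a₀, h₀⟩
  obtain ⟨γ, a, hγ⟩ := hrank _ (hsingle j)
  have hsum : rkWt B (ψ (Pi.single j 1 + Pi.single j₀ 1)) ≤ 1 := by
    have hrat : (Pi.single j 1 + Pi.single j₀ 1 : Fin N → L) =
        algebraMap K L ∘ (Pi.single j 1 + Pi.single j₀ 1) := by
      ext t
      simp [Pi.single_apply, apply_ite (algebraMap K L)]
    rw [hψ, hrat]
    exact rkWt_algebraMap_comp_le_one B _
  obtain ⟨c, rfl⟩ := Submodule.mem_span_singleton.1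
    (mem_span_singleton_of_rkWt_map_single_add_single_le_one hinj hj hγ h₀ hsum)
  exact ⟨fun t => a t * c, by rw [hγ]; ext t; simp [smul_smul]⟩

theorem exists_smul_vecMul_of_rkWt_isometry (hψ : ∀ v, rkWt B (ψ v) = rkWt B v) :
    ∃ (β : Lˣ) (A : Matrix (Fin N) (Fin N) K), IsUnit A ∧
      ∀ v, ψ v = (β : L) • (v ᵥ* A.map (algebraMap K L)) := by
  obtain ⟨β, hβ⟩ := exists_unit_forall_map_single_eq_smul_of_rkWt_isometry hψ
  choose A hA using hβ
  have hψA : ∀ v, ψ v = (β : L) • (v ᵥ* (Matrix.of A).map (algebraMap K L)) := by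
    intro v
    conv_lhs => rw [← (Pi.basisFun L (Fin N)).sum_repr v]
    simp only [map_sum, map_smul, Pi.basisFun_apply, Pi.basisFun_repr, hA]
    ext t
    simp [Matrix.vecMul, dotProduct, Finset.mul_sum, Algebra.smul_def, mul_comm, mul_left_comm]
  refine ⟨β, Matrix.of A, ?_, hψA⟩
  rw [← Matrix.vecMul_injective_iff_isUnit]
  intro x y hxy
  have hψxy : ψ (algebraMap K L ∘ x) = ψ (algebraMap K L ∘ y) := by
    have hxy' : algebraMap K L ∘ x ᵥ* (Matrix.of A).map (algebraMap K L) =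
        algebraMap K L ∘ y ᵥ* (Matrix.of A).map (algebraMap K L) := by
      ext t
      rw [← RingHom.map_vecMul, ← RingHom.map_vecMul]
      exact congrArg _ (congr_fun hxy t)
    rw [hψA, hψA, hxy']
  exact funext fun t =>
    (algebraMap K L).injective (congr_fun (injective_of_rkWt_isometry hψ hψxy) t)

end RankIsometry

section SumRankIsometry

variable {K L : Type*} [Field K] [Field L] [Algebra K L] {m ℓ N : ℕ} (B : Module.Basis (Fin m) K L)

theorem srWt_eq_zero_iff {c : Fin ℓ → Fin N → L} : srWt B c = 0 ↔ c = 0 := by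
  simp only [srWt, Finset.sum_eq_zero_iff, Finset.mem_univ, true_implies, rkWt_eq_zero_iff,
    funext_iff (f := c), Pi.zero_apply]

theorem srWt_single (i : Fin ℓ) (v : Fin N → L) : srWt B (Pi.single i v) = rkWt B v := by
  rw [srWt, Finset.sum_eq_single i (fun k _ hk => by rw [Pi.single_eq_of_ne hk, rkWt_eq_zero_iff])
    (by simp), Pi.single_eq_same]

theorem eq_of_srWt_le_one {c : Fin ℓ → Fin N → L} (hc : srWt B c ≤ 1) {k k' : Fin ℓ}
    (hk : c k ≠ 0) (hk' : c k' ≠ 0) : k = k' := by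
  by_contra hne
  have h₁ : 1 ≤ rkWt B (c k) := Nat.one_le_iff_ne_zero.2 ((rkWt_eq_zero_iff B).not.2 hk)
  have h₂ : 1 ≤ rkWt B (c k') := Nat.one_le_iff_ne_zero.2 ((rkWt_eq_zero_iff B).not.2 hk')
  have hpair : rkWt B (c k) + rkWt B (c k') ≤ srWt B c := by
    rw [← Finset.sum_pair (f := fun k => rkWt B (c k)) hne]
    exact Finset.sum_le_sum_of_subset (Finset.subset_univ _)
  omega

variable {B} {φ : (Fin ℓ → Fin N → L) →ₗ[L] (Fin ℓ → Fin N → L)}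

theorem injective_of_srWt_isometry (hφ : ∀ c, srWt B (φ c) = srWt B c) : Function.Injective φ := by
  rw [← LinearMap.ker_eq_bot, LinearMap.ker_eq_bot']
  intro c hc
  rw [← srWt_eq_zero_iff B, ← hφ, hc, srWt_eq_zero_iff]

theorem exists_block_of_srWt_isometry (hφ : ∀ c, srWt B (φ c) = srWt B c) (i : Fin ℓ) :
    ∃ s, ∀ v k, k ≠ s → φ (Pi.single i v) k = 0 := by
  set u : (Fin N → K) → Fin ℓ → Fin N → L := fun x => φ (Pi.single i (algebraMap K L ∘ x))
  have hu_add : ∀ x y, u (x + y) = u x + u y := fun x y => by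
    simp only [u, ← map_add, ← Pi.single_add]
    congr 3
    ext t
    simp
  have hu_wt : ∀ x, srWt B (u x) ≤ 1 := fun x => by
    simpa only [u, hφ, srWt_single] using rkWt_algebraMap_comp_le_one B x
  have : Nonempty (Fin ℓ) := ⟨i⟩
  obtain ⟨s, hs⟩ :=
    exists_forall_ne_apply_eq_zero_of_map_add hu_add fun x => eq_of_srWt_le_one B (hu_wt x)
  refine ⟨s, fun v k hk => ?_⟩
  have hzero : LinearMap.proj k ∘ₗ φ ∘ₗ LinearMap.single L (fun _ => Fin N → L) i = 0 := by
    refine (Pi.basisFun L (Fin N)).ext fun j => ?_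
    have hj : φ (Pi.single i (algebraMap K L ∘ Pi.single j 1)) k = 0 := hs (Pi.single j 1) k hk
    rw [algebraMap_comp_single_one] at hj
    simpa using hj
  exact LinearMap.congr_fun hzero v

theorem exists_perm_of_srWt_isometry (hφ : ∀ c, srWt B (φ c) = srWt B c) :
    ∃ σ : Equiv.Perm (Fin ℓ), ∀ i v k, k ≠ σ i → φ (Pi.single i v) k = 0 := by
  rcases isEmpty_or_nonempty (Fin N) with _ | ⟨⟨j₀⟩⟩
  · exact ⟨1, fun i v k _ => Subsingleton.elim _ _⟩
  choose σ hσ using exists_block_of_srWt_isometry hφ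
  have hsurj : Function.Surjective σ := by
    intro k
    by_contra! hk
    obtain ⟨c, hc⟩ :=
      LinearMap.injective_iff_surjective.1 (injective_of_srWt_isometry hφ) (fun _ _ => 1)
    have h := congr_fun (congr_fun hc k) j₀
    rw [← Finset.univ_sum_single c, map_sum, Finset.sum_apply,
      Finset.sum_eq_zero fun i _ => hσ i (c i) k (hk i).symm] at h
    exact zero_ne_one h
  exact ⟨Equiv.ofBijective σ ⟨Finite.injective_iff_surjective.2 hsurj, hsurj⟩, hσ⟩

theorem exists_perm_rkWt_isometry_of_srWt_isometry (hφ : ∀ c, srWt B (φ c) = srWt B c) :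
    ∃ (σ : Equiv.Perm (Fin ℓ)) (ψ : Fin ℓ → (Fin N → L) →ₗ[L] (Fin N → L)),
      (∀ k v, rkWt B (ψ k v) = rkWt B v) ∧ ∀ c k, φ c k = ψ k (c (σ k)) := by
  obtain ⟨σ, hσ⟩ := exists_perm_of_srWt_isometry hφ
  let ψ k := LinearMap.proj k ∘ₗ φ ∘ₗ LinearMap.single L (fun _ => Fin N → L) (σ.symm k)
  have hblock : ∀ k v, φ (Pi.single (σ.symm k) v) = Pi.single k (ψ k v) := by
    intro k v
    ext k' : 1
    obtain rfl | hk' := eq_or_ne k' k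
    · simp [ψ]
    · rw [Pi.single_eq_of_ne hk', hσ _ _ _ (by simpa using hk')]
  refine ⟨σ.symm, ψ, fun k v => ?_, fun c k => ?_⟩
  · rw [← srWt_single B k, ← hblock, hφ, srWt_single]
  · conv_lhs => rw [← Finset.univ_sum_single c]
    rw [map_sum, Finset.sum_apply, Finset.sum_eq_single (σ.symm k)]
    · rfl
    · intro i _ hi
      exact hσ i _ k (by rintro rfl; simp at hi)
    · simp

end SumRankIsometry

theorem linear_sumRank_isometry_iff_general {K L : Type*} [Field K] [Field L]
    [Algebra K L] {m ℓ N : ℕ} (B : Module.Basis (Fin m) K L)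
    (φ : (Fin ℓ → Fin N → L) →ₗ[L] (Fin ℓ → Fin N → L)) :
    (∀ c, srWt B (φ c) = srWt B c) ↔
      ∃ (β : Fin ℓ → Lˣ) (A : Fin ℓ → Matrix (Fin N) (Fin N) K)
        (σ : Equiv.Perm (Fin ℓ)),
        (∀ i, IsUnit (A i)) ∧
        ∀ c i, φ c i = (β i : L) • Matrix.vecMul (c (σ i)) ((A i).map (algebraMap K L)) := by
  constructor
  · intro hφ
    obtain ⟨σ, ψ, hψ, hφψ⟩ := exists_perm_rkWt_isometry_of_srWt_isometry hφ
    choose β A hA hψA using fun k => exists_smul_vecMul_of_rkWt_isometry (hψ k)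
    exact ⟨β, A, σ, hA, fun c k => (hφψ c k).trans (hψA k _)⟩
  · rintro ⟨β, A, σ, hA, hφ⟩ c
    simp only [srWt, hφ, rkWt_smul B (Units.ne_zero _), rkWt_vecMul_of_isUnit B (hA _)]
    exact Equiv.sum_comp σ fun i => rkWt B (c i)

/-- characterization of the linear sum-rank isometries of `F_{q^m}^{ℓN}`
with equal sublengths: they are exactly the maps
`(c^(1),…,c^(ℓ)) ↦ (β_1 c^(σ(1)) A_1, …, β_ℓ c^(σ(ℓ)) A_ℓ)` with `β_i ∈ F_{q^m}^*`,
`A_i ∈ F_q^{N×N}` invertible and `σ` a permutation of the shots. -/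
theorem linear_sumRank_isometry_iff {K L : Type*} [Field K] [Fintype K] [Field L]
    [Fintype L] [Algebra K L] {m ℓ N : ℕ} (B : Module.Basis (Fin m) K L)
    (φ : (Fin ℓ → Fin N → L) →ₗ[L] (Fin ℓ → Fin N → L)) :
    (∀ c, srWt B (φ c) = srWt B c) ↔
      ∃ (β : Fin ℓ → Lˣ) (A : Fin ℓ → Matrix (Fin N) (Fin N) K)
        (σ : Equiv.Perm (Fin ℓ)),
        (∀ i, IsUnit (A i)) ∧
        ∀ c i, φ c i = (β i : L) • Matrix.vecMul (c (σ i)) ((A i).map (algebraMap K L)) :=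
  linear_sumRank_isometry_iff_general B φ
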